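/- Let a, b, c ∈ ℝ with pairwise distances at most 1 (a triangle in the unit interval graph), and let x, y ∈ ℝ with |x - a| ≤ 1, |x - b| > 1, |x - c| > 1, |y - b| ≤ 1, |y - a| > 1, |y - c| > 1. Then there is no point w ∈ ℝ with |w - c| ≤ 1, |w - a| > 1, and |w - b| > 1. -/
import Mathlib


/-- A triangle on the real line cannot have three pendant neighbors,
each adjacent to exactly one triangle vertex. -/
theorem no_net_on_line (a b c x y : ℝ)
    (hab : |a - b| ≤ 1) (hac : |a - c| ≤ 1) (hbc : |b - c| ≤ 1)
    (hxa : |x - a| ≤ 1) (hxb : |x - b| > 1) (hxc : |x - c| > 1)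
    (hyb : |y - b| ≤ 1) (hya : |y - a| > 1) (hyc : |y - c| > 1) :
    ¬ ∃ w : ℝ, |w - c| ≤ 1 ∧ |w - a| > 1 ∧ |w - b| > 1 := by
  rintro ⟨w, h1, h2, h3⟩
  rw [abs_le] at hab hac hbc hxa hyb h1
  rw [gt_iff_lt, lt_abs] at hxb hxc hya hyc h2 h3
  rcases hxb with h | h <;> rcases hxc with h' | h' <;>
    rcases hya with g | g <;> rcases hyc with g' | g' <;>
    rcases h2 with k | k <;> rcases h3 with k' | k' <;> linarith
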